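/- Let T be a strongly connected tournament of order n with diameter d ≥ 6. If Ω(T) ≤ 2d − 6 (minimum size in arcs of a strong spanning subdigraph), then smc_v(T) = n − Ω_v(T) + 1, where Ω_v(T) is the minimum order of a strong, absorbing and dominating subdigraph of T. -/

import Mathlib

namespace SVMC

variable {V : Type*}

/-- `IsWalk A u v l` : `u :: l` is a directed walk from `u` to `v` in the digraph
with arc relation `A`; its length (number of arcs) is `l.length`. -/
def IsWalk (A : V → V → Prop) (u v : V) (l : List V) : Prop :=
  List.Chain A u l ∧ (u :: l).getLast (List.cons_ne_nil u l) = v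

/-- A directed path: a walk with no repeated vertices. -/
def IsPath (A : V → V → Prop) (u v : V) (l : List V) : Prop :=
  IsWalk A u v l ∧ (u :: l).Nodup

def Reachable (A : V → V → Prop) (u v : V) : Prop := ∃ l, IsWalk A u v l

/-- A digraph is strong if every vertex is reachable from every other vertex. -/
def Strong (A : V → V → Prop) : Prop := ∀ u v : V, Reachable A u v

/-- Directed distance: the minimum length of a directed walk from `u` to `v`. -/
noncomputable def dist (A : V → V → Prop) (u v : V) : ℕ :=
  sInf {n | ∃ l, IsWalk A u v l ∧ l.length = n}

/-- Diameter: maximum directed distance over ordered pairs of vertices. -/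
noncomputable def diam (A : V → V → Prop) : ℕ :=
  sSup {d | ∃ u v : V, dist A u v = d}

/-- The internal vertices of the walk `u :: l` (ending at the last entry of `l`)
are `l.dropLast`.  `MonoInternal Γ l` says they all receive one color. -/
def MonoInternal (Γ : V → ℕ) (l : List V) : Prop :=
  ∃ c, ∀ x ∈ l.dropLast, Γ x = c

/-- A strong vertex-monochromatic connection coloring. -/
def IsSVMC (A : V → V → Prop) (Γ : V → ℕ) : Prop :=
  ∀ u v : V, ∃ l, IsPath A u v l ∧ MonoInternal Γ l

/-- The number of colors used by a vertex coloring. -/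
noncomputable def colorCount (Γ : V → ℕ) : ℕ := (Set.range Γ).ncard

/-- The strong vertex-monochromatic connection number. -/
noncomputable def smcv (A : V → V → Prop) : ℕ :=
  sSup {k | ∃ Γ : V → ℕ, IsSVMC A Γ ∧ colorCount Γ = k}

def TotalAbsorbing (A : V → V → Prop) (S : Set V) : Prop := ∀ v : V, ∃ w ∈ S, A v w

def TotalDominating (A : V → V → Prop) (S : Set V) : Prop := ∀ v : V, ∃ w ∈ S, A w v

def Absorbing (A : V → V → Prop) (S : Set V) : Prop := ∀ v ∉ S, ∃ w ∈ S, A v w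

def Dominating (A : V → V → Prop) (S : Set V) : Prop := ∀ v ∉ S, ∃ w ∈ S, A w v

/-- A walk all of whose vertices lie in `S`. -/
def IsWalkIn (A : V → V → Prop) (S : Set V) (u v : V) (l : List V) : Prop :=
  IsWalk A u v l ∧ ∀ x ∈ u :: l, x ∈ S

/-- The subdigraph induced by `S` is strongly connected. -/
def StrongOn (A : V → V → Prop) (S : Set V) : Prop :=
  ∀ u ∈ S, ∀ v ∈ S, ∃ l, IsWalkIn A S u v l

/-- `Ω_v(D)`: minimum order of a strong, absorbing and dominating subdigraph. -/
noncomputable def Omegav (A : V → V → Prop) : ℕ :=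
  sInf {k | ∃ S : Set V, S.Nonempty ∧ StrongOn A S ∧ Absorbing A S ∧
    Dominating A S ∧ S.ncard = k}

/-- A directed cycle through `u` with vertex list `u :: l` (length `l.length`). -/
def IsCycle (A : V → V → Prop) (u : V) (l : List V) : Prop :=
  l ≠ [] ∧ IsWalk A u u l ∧ (u :: l.dropLast).Nodup

/-- The girth: minimum length of a directed cycle. -/
noncomputable def girth (A : V → V → Prop) : ℕ :=
  sInf {n | ∃ u l, IsCycle A u l ∧ l.length = n}

/-- The arcs of the walk `u :: l` are the consecutive pairs, i.e. `(u :: l).zip l`.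
`MonoArcs` says they all get one color under the arc coloring `ΓA`. -/
def MonoArcs (ΓA : V → V → ℕ) (u : V) (l : List V) : Prop :=
  ∃ c, ∀ p ∈ (u :: l).zip l, ΓA p.1 p.2 = c

/-- A strong monochromatic connection (arc) coloring. -/
def IsSMC (A : V → V → Prop) (ΓA : V → V → ℕ) : Prop :=
  ∀ u v : V, ∃ l, IsPath A u v l ∧ MonoArcs ΓA u l

/-- The number of colors used on the arcs. -/
noncomputable def arcColorCount (A : V → V → Prop) (ΓA : V → V → ℕ) : ℕ :=
  ((fun p : V × V => ΓA p.1 p.2) '' {p : V × V | A p.1 p.2}).ncard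

/-- The strong monochromatic connection number (arc version). -/
noncomputable def smc (A : V → V → Prop) : ℕ :=
  sSup {k | ∃ ΓA : V → V → ℕ, IsSMC A ΓA ∧ arcColorCount A ΓA = k}

/-- The number of arcs of a digraph. -/
noncomputable def arcCount (A : V → V → Prop) : ℕ := {p : V × V | A p.1 p.2}.ncard

/-- `Ω(D)`: minimum number of arcs of a strong spanning subdigraph. -/
noncomputable def Omega (A : V → V → Prop) : ℕ :=
  sInf {k | ∃ B : V → V → Prop, (∀ u v, B u v → A u v) ∧ Strong B ∧ arcCount B = k}

/-- The arcs of `A`, as the vertex type of the line digraph. -/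
def Arc (A : V → V → Prop) : Type _ := {p : V × V // A p.1 p.2}

/-- Adjacency in the line digraph: head of `e` equals tail of `f`. -/
def lineAdj (A : V → V → Prop) : Arc A → Arc A → Prop :=
  fun e f => e.1.2 = f.1.1

/-- `(u,v)` is a bad pair: `N⁺(u) = {v}` and `N⁻(v) = {u}`. -/
def BadPair (A : V → V → Prop) (u v : V) : Prop :=
  {w | A u w} = {v} ∧ {w | A w v} = {u}

/-- A tournament: an orientation of a complete graph. -/
def IsTournament (A : V → V → Prop) : Prop :=
  (∀ v, ¬ A v v) ∧ ∀ u v : V, u ≠ v → (A u v ↔ ¬ A v u)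

/-- The directed 3-cycle on `Fin 3`. -/
def C3Adj : Fin 3 → Fin 3 → Prop := fun i j => j = i + 1

/-- `A` is isomorphic to the directed 3-cycle. -/
def IsoC3 (A : V → V → Prop) : Prop :=
  ∃ e : V ≃ Fin 3, ∀ u v : V, A u v ↔ C3Adj (e u) (e v)

end SVMC

/-!
For the lower bound, colour a minimum strong, absorbing and dominating set `S` with one colour
and every other vertex with a colour of its own: any two vertices are joined by a path whose
interior lies in `S`.

For the upper bound, a strong spanning subdigraph has at least `n` arcs, so `n ≤ 2d - 6`.
A monochromatic path between a diametral pair `x₀, x₁` has `d - 1` interior vertices, so the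
interior of every monochromatic path of length at least `d - 2` lies in the same colour class `C`:
two different classes would need `2d - 4 > n` vertices. Every vertex `v` satisfies
`dist x₀ v ≥ 3` or `dist v x₁ ≥ d - 2`, and in a tournament `dist x w + 2 ≤ dist x v` forces the
arc `v → w`. Together with the long monochromatic paths out of `v` (or into `v`) this makes `C`
strong, absorbing and dominating, whence `colorCount ≤ n - |C| + 1 ≤ n - Ω_v + 1`.
-/

namespace SVMC

open Relation

variable {V : Type*} {A : V → V → Prop} {S : Set V} {u v w x : V} {l m : List V}

lemma isWalk_iff :
    IsWalk A u v l ↔ (u :: l).IsChain A ∧ (u :: l).getLast (List.cons_ne_nil u l) = v :=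
  Iff.rfl

@[simp] lemma isWalk_nil : IsWalk A u v [] ↔ u = v := by
  simp [isWalk_iff]

@[simp] lemma isWalk_cons : IsWalk A u v (w :: l) ↔ A u w ∧ IsWalk A w v l := by
  simp [isWalk_iff, and_assoc]

lemma IsWalk.append (h₁ : IsWalk A u v l) (h₂ : IsWalk A v w m) : IsWalk A u w (l ++ m) := by
  induction l generalizing u with
  | nil => rwa [List.nil_append, isWalk_nil.1 h₁]
  | cons a l ih =>
    obtain ⟨hua, ha⟩ := isWalk_cons.1 h₁
    exact isWalk_cons.2 ⟨hua, ih ha⟩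

lemma IsWalk.of_append_cons (h : IsWalk A u v (l ++ w :: m)) : IsWalk A w v m := by
  induction l generalizing u with
  | nil => exact (isWalk_cons.1 h).2
  | cons a l ih => exact ih (isWalk_cons.1 h).2

lemma IsWalk.exists_isPath_subset (h : IsWalk A u v l) : ∃ l', IsPath A u v l' ∧ l' ⊆ l := by
  induction hlen : l.length using Nat.strong_induction_on generalizing u l with
  | _ n ih =>
  by_cases hu : u ∈ l
  · obtain ⟨l₁, l₂, rfl⟩ := List.append_of_mem hu
    obtain ⟨l', hp, hsub⟩ := ih l₂.length (by simp at hlen; omega) h.of_append_cons rfl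
    exact ⟨l', hp, fun x hx => by simp [hsub hx]⟩
  · cases l with
    | nil => exact ⟨[], ⟨h, List.nodup_singleton u⟩, List.Subset.refl _⟩
    | cons a l =>
      obtain ⟨hua, ha⟩ := isWalk_cons.1 h
      obtain ⟨l', ⟨hw, hnd⟩, hsub⟩ := ih l.length (by simp at hlen; omega) ha rfl
      have hsub' := List.cons_subset_cons a hsub
      exact ⟨a :: l', ⟨isWalk_cons.2 ⟨hua, hw⟩, List.nodup_cons.2 ⟨fun h' => hu (hsub' h'), hnd⟩⟩,
        hsub'⟩

lemma IsPath.ne_of_mem_dropLast (hp : IsPath A u v l) (hx : x ∈ l.dropLast) : x ≠ v := by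
  have hl : l ≠ [] := by rintro rfl; simp at hx
  have hlast : l.getLast hl = v := by rw [← hp.1.2, List.getLast_cons hl]
  have hnd := hp.2.of_cons
  rw [← List.dropLast_append_getLast hl, List.nodup_append] at hnd
  exact hnd.2.2 x hx _ (by simp [hlast])

def arcInto (A : V → V → Prop) (S : Set V) (x y : V) : Prop := A x y ∧ y ∈ S

lemma exists_isWalk_subset_iff :
    (∃ l, IsWalk A u v l ∧ ∀ x ∈ l, x ∈ S) ↔ ReflTransGen (arcInto A S) u v := by
  constructor
  · rintro ⟨l, hw, hS⟩
    induction l generalizing u with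
    | nil => rw [isWalk_nil.1 hw]
    | cons a l ih =>
      obtain ⟨hua, ha⟩ := isWalk_cons.1 hw
      exact .head ⟨hua, hS a (by simp)⟩ (ih ha fun x hx => hS x (by simp [hx]))
  · intro h
    induction h using ReflTransGen.head_induction_on with
    | refl => exact ⟨[], isWalk_nil.2 rfl, by simp⟩
    | head hab _ ih =>
      obtain ⟨l, hw, hS⟩ := ih
      exact ⟨_ :: l, isWalk_cons.2 ⟨hab.1, hw⟩, by simpa [hab.2] using hS⟩

lemma strongOn_iff : StrongOn A S ↔ ∀ u ∈ S, ∀ v ∈ S, ReflTransGen (arcInto A S) u v := by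
  refine forall₂_congr fun u hu => forall₂_congr fun v _ => ?_
  simp only [IsWalkIn, List.forall_mem_cons, hu, true_and, exists_isWalk_subset_iff]

def ReachesThrough (A : V → V → Prop) (S : Set V) (u v : V) : Prop :=
  ∃ a ∈ S, ∃ b ∈ S, A u a ∧ A b v ∧ ReflTransGen (arcInto A S) a b

lemma IsWalk.exists_reflTransGen_adj (h : IsWalk A u v l) (hl : l ≠ [])
    (hS : ∀ x ∈ u :: l.dropLast, x ∈ S) : ∃ b ∈ S, ReflTransGen (arcInto A S) u b ∧ A b v := by
  induction l generalizing u with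
  | nil => exact absurd rfl hl
  | cons a l ih =>
    obtain ⟨hua, ha⟩ := isWalk_cons.1 h
    rcases eq_or_ne l [] with rfl | hl'
    · exact ⟨u, hS u (by simp), .refl, isWalk_nil.1 ha ▸ hua⟩
    · rw [List.dropLast_cons_of_ne_nil hl'] at hS
      obtain ⟨b, hb, hab, hbv⟩ := ih ha hl' fun x hx => hS x (List.mem_cons_of_mem u hx)
      exact ⟨b, hb, .head ⟨hua, hS a (by simp)⟩ hab, hbv⟩

lemma IsWalk.reachesThrough (h : IsWalk A u v l) (hl : 2 ≤ l.length)
    (hS : ∀ x ∈ l.dropLast, x ∈ S) : ReachesThrough A S u v := by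
  obtain _ | ⟨a, l⟩ := l
  · simp at hl
  have hl' : l ≠ [] := by rintro rfl; simp at hl
  rw [List.dropLast_cons_of_ne_nil hl'] at hS
  obtain ⟨hua, ha⟩ := isWalk_cons.1 h
  obtain ⟨b, hb, hab, hbv⟩ := ha.exists_reflTransGen_adj hl' hS
  exact ⟨a, hS a (by simp), b, hb, hua, hbv, hab⟩

lemma dist_le_length (h : IsWalk A u v l) : dist A u v ≤ l.length :=
  Nat.sInf_le ⟨l, h, rfl⟩

lemma dist_self (u : V) : dist A u u = 0 :=
  Nat.le_zero.1 (dist_le_length (l := []) (isWalk_nil.2 rfl))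

lemma dist_le_one (h : A u v) : dist A u v ≤ 1 :=
  dist_le_length (l := [v]) (by simpa using h)

lemma Strong.exists_isWalk_length_eq_dist (hs : Strong A) (u v : V) :
    ∃ l, IsWalk A u v l ∧ l.length = dist A u v := by
  obtain ⟨l, hl⟩ := hs u v
  exact Nat.sInf_mem (s := {n | ∃ l, IsWalk A u v l ∧ l.length = n}) ⟨_, l, hl, rfl⟩

lemma Strong.dist_triangle (hs : Strong A) (u v w : V) :
    dist A u w ≤ dist A u v + dist A v w := by
  obtain ⟨l, hl, hlen⟩ := hs.exists_isWalk_length_eq_dist u v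
  obtain ⟨m, hm, hmlen⟩ := hs.exists_isWalk_length_eq_dist v w
  simpa [hlen, hmlen] using dist_le_length (hl.append hm)

lemma Strong.exists_adj [Nontrivial V] (hs : Strong A) (u : V) : ∃ v, A u v := by
  obtain ⟨v, hv⟩ := exists_ne u
  obtain ⟨_ | ⟨a, l⟩, hw⟩ := hs u v
  · exact absurd (isWalk_nil.1 hw).symm hv
  · exact ⟨a, (isWalk_cons.1 hw).1⟩

lemma exists_dist_eq_diam [Finite V] (h : diam A ≠ 0) : ∃ u v, dist A u v = diam A := by
  have hfin : {d | ∃ u v : V, dist A u v = d}.Finite :=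
    (Set.finite_range fun p : V × V => dist A p.1 p.2).subset
      (by rintro _ ⟨u, v, rfl⟩; exact ⟨(u, v), rfl⟩)
  rcases Set.eq_empty_or_nonempty {d | ∃ u v : V, dist A u v = d} with he | hne
  · simp [diam, he] at h
  · exact Nat.sSup_mem hne hfin.bddAbove

lemma card_le_omega [Fintype V] [Nontrivial V] (hs : Strong A) : Fintype.card V ≤ Omega A := by
  obtain ⟨B, -, hB, hcount⟩ := Nat.sInf_mem (s := {k | ∃ B : V → V → Prop,
    (∀ u v, B u v → A u v) ∧ Strong B ∧ arcCount B = k}) ⟨_, A, fun _ _ h => h, hs, rfl⟩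
  choose f hf using hB.exists_adj
  rw [Omega, ← hcount, ← Nat.card_eq_fintype_card, arcCount, ← Nat.card_coe_set_eq]
  exact Nat.card_le_card_of_injective (fun u => ⟨(u, f u), hf u⟩) fun a b h => congrArg (·.1.1) h

lemma IsTournament.adj_or_adj (ht : IsTournament A) (h : u ≠ v) : A u v ∨ A v u :=
  or_iff_not_imp_left.2 (ht.2 v u h.symm).2

lemma IsTournament.adj_of_dist_from_add_two_le (ht : IsTournament A) (hs : Strong A)
    (h : dist A x w + 2 ≤ dist A x v) : A v w :=
  (ht.adj_or_adj (by rintro rfl; omega)).resolve_right fun hwv => by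
    have := hs.dist_triangle x w v
    have := dist_le_one hwv
    omega

lemma IsTournament.adj_of_dist_to_add_two_le (ht : IsTournament A) (hs : Strong A)
    (h : dist A w x + 2 ≤ dist A v x) : A w v :=
  (ht.adj_or_adj (by rintro rfl; omega)).resolve_right fun hvw => by
    have := hs.dist_triangle v w x
    have := dist_le_one hvw
    omega

lemma color_eq_of_card_lt_length_add {α : Type*} [Fintype V] {f : V → α} {a b : α}
    {l₁ l₂ : List V} (h₁ : l₁.Nodup) (h₂ : l₂.Nodup) (ha : ∀ x ∈ l₁, f x = a)
    (hb : ∀ x ∈ l₂, f x = b) (hcard : Fintype.card V < l₁.length + l₂.length) : a = b := by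
  by_contra hab
  have hnd : (l₁ ++ l₂).Nodup :=
    List.nodup_append.2 ⟨h₁, h₂, fun x hx y hy hxy => hab (by rw [← ha x hx, hxy, hb y hy])⟩
  have := hnd.length_le_card
  simp only [List.length_append] at this
  omega

theorem exists_color_reachesThrough [Fintype V] {Γ : V → ℕ} {x₀ x₁ : V} {d : ℕ}
    (hΓ : IsSVMC A Γ) (hd : dist A x₀ x₁ = d) (hd4 : 4 ≤ d)
    (hn : Fintype.card V + 5 ≤ 2 * d) :
    ∃ c, ∀ u v, d - 2 ≤ dist A u v → ReachesThrough A {x | Γ x = c} u v := by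
  have hpath : ∀ u v, ∃ l c, IsPath A u v l ∧ dist A u v ≤ l.length ∧ l.dropLast.Nodup ∧
      ∀ x ∈ l.dropLast, Γ x = c := by
    intro u v
    obtain ⟨l, hp, c, hc⟩ := hΓ u v
    exact ⟨l, c, hp, dist_le_length hp.1, hp.2.of_cons.sublist l.dropLast_sublist, hc⟩
  obtain ⟨lQ, c, -, hQ, hQnd, hQc⟩ := hpath x₀ x₁
  refine ⟨c, fun u v huv => ?_⟩
  obtain ⟨l, c', hp, hl, hnd, hc'⟩ := hpath u v
  have hcc : c' = c :=
    color_eq_of_card_lt_length_add hnd hQnd hc' hQc (by simp only [List.length_dropLast]; omega)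
  exact hp.1.reachesThrough (by omega) (hcc ▸ hc')

def StrongAbsDom (A : V → V → Prop) (S : Set V) : Prop :=
  S.Nonempty ∧ StrongOn A S ∧ Absorbing A S ∧ Dominating A S

section Tournament

variable {C : Set V} {x₀ x₁ : V} {d : ℕ}

lemma exists_adj_reflTransGen_of_adj_from (ht : IsTournament A) (hs : Strong A)
    (hd : dist A x₀ x₁ = d) (hd4 : 4 ≤ d)
    (hC : ∀ u v, d - 2 ≤ dist A u v → ReachesThrough A C u v) (hw : w ∈ C) (hxw : A x₀ w)
    (v : V) : ∃ w' ∈ C, A v w' ∧ ReflTransGen (arcInto A C) w' w := by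
  have := dist_le_one hxw
  by_cases hv : 3 ≤ dist A x₀ v
  · exact ⟨w, hw, ht.adj_of_dist_from_add_two_le hs (x := x₀) (by omega), .refl⟩
  obtain ⟨a, ha, b, hb, hva, hbx, hab⟩ := hC v x₁ (by have := hs.dist_triangle x₀ v x₁; omega)
  have hbw : A b w := ht.adj_of_dist_from_add_two_le hs (x := x₀) <| by
    have := hs.dist_triangle x₀ b x₁
    have := dist_le_one hbx
    omega
  exact ⟨a, ha, hva, hab.tail ⟨hbw, hw⟩⟩

lemma exists_adj_reflTransGen_of_adj_to (ht : IsTournament A) (hs : Strong A)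
    (hd : dist A x₀ x₁ = d) (hd4 : 4 ≤ d)
    (hC : ∀ u v, d - 2 ≤ dist A u v → ReachesThrough A C u v) (hw : w ∈ C) (hwx : A w x₁)
    (v : V) : ∃ w' ∈ C, A w' v ∧ ReflTransGen (arcInto A C) w w' := by
  have := dist_le_one hwx
  by_cases hv : 3 ≤ dist A v x₁
  · exact ⟨w, hw, ht.adj_of_dist_to_add_two_le hs (x := x₁) (by omega), .refl⟩
  obtain ⟨a, ha, b, hb, hxa, hbv, hab⟩ := hC x₀ v (by have := hs.dist_triangle x₀ v x₁; omega)
  have hwa : A w a := ht.adj_of_dist_to_add_two_le hs (x := x₁) <| by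
    have := hs.dist_triangle x₀ a x₁
    have := dist_le_one hxa
    omega
  exact ⟨b, hb, hbv, (ReflTransGen.single ⟨hwa, ha⟩).trans hab⟩

theorem strongAbsDom_of_reachesThrough (ht : IsTournament A)
    (hs : Strong A) (hd : dist A x₀ x₁ = d) (hd4 : 4 ≤ d)
    (hC : ∀ u v, d - 2 ≤ dist A u v → ReachesThrough A C u v) : StrongAbsDom A C := by
  obtain ⟨w₀, hw₀, w₁, hw₁, hxw₀, hwx₁, hw₀₁⟩ := hC x₀ x₁ (by omega)
  have hout := exists_adj_reflTransGen_of_adj_from ht hs hd hd4 hC hw₀ hxw₀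
  have hin := exists_adj_reflTransGen_of_adj_to ht hs hd hd4 hC hw₁ hwx₁
  refine ⟨⟨w₀, hw₀⟩, strongOn_iff.2 fun u _ v hv => ?_, fun v _ => ?_, fun v _ => ?_⟩
  · obtain ⟨a, ha, hua, haw⟩ := hout u
    obtain ⟨b, hb, hbv, hwb⟩ := hin v
    exact (ReflTransGen.head ⟨hua, ha⟩ haw).trans (hw₀₁.trans (hwb.tail ⟨hbv, hv⟩))
  · obtain ⟨a, ha, hva, -⟩ := hout v
    exact ⟨a, ha, hva⟩
  · obtain ⟨b, hb, hbv, -⟩ := hin v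
    exact ⟨b, hb, hbv⟩

end Tournament

lemma omegav_le_ncard (h : StrongAbsDom A S) : Omegav A ≤ S.ncard :=
  Nat.sInf_le ⟨S, h.1, h.2.1, h.2.2.1, h.2.2.2, rfl⟩

lemma exists_strongAbsDom_ncard_eq_omegav [Nonempty V] (hs : Strong A) :
    ∃ S, StrongAbsDom A S ∧ S.ncard = Omegav A := by
  have huniv : StrongOn A Set.univ := fun u _ v _ =>
    let ⟨l, hl⟩ := hs u v; ⟨l, hl, fun _ _ => trivial⟩
  obtain ⟨S, h₁, h₂, h₃, h₄, h₅⟩ := Nat.sInf_mem (s := {k | ∃ S : Set V, S.Nonempty ∧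
    StrongOn A S ∧ Absorbing A S ∧ Dominating A S ∧ S.ncard = k})
    ⟨_, Set.univ, Set.univ_nonempty, huniv, by simp [Absorbing], by simp [Dominating], rfl⟩
  exact ⟨S, ⟨h₁, h₂, h₃, h₄⟩, h₅⟩

lemma isSVMC_of_forall_mem_eq (hstr : StrongOn A S) (habs : Absorbing A S) (hdom : Dominating A S)
    {Γ : V → ℕ} {c : ℕ} (hΓ : ∀ x ∈ S, Γ x = c) : IsSVMC A Γ := by
  intro u v
  obtain ⟨s, hs, hus⟩ : ∃ s ∈ S, ReflTransGen (arcInto A S) u s := by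
    by_cases hu : u ∈ S
    · exact ⟨u, hu, .refl⟩
    · obtain ⟨s, hs, hus⟩ := habs u hu
      exact ⟨s, hs, .single ⟨hus, hs⟩⟩
  obtain ⟨t, ht, htv⟩ : ∃ t ∈ S, ReflTransGen (arcInto A (insert v S)) t v := by
    by_cases hv : v ∈ S
    · exact ⟨v, hv, .refl⟩
    · obtain ⟨t, ht, htv⟩ := hdom v hv
      exact ⟨t, ht, .single ⟨htv, Set.mem_insert v S⟩⟩
  have hmono : ReflTransGen (arcInto A S) ≤ ReflTransGen (arcInto A (insert v S)) :=
    ReflTransGen.mono fun _ _ h => ⟨h.1, Or.inr h.2⟩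
  obtain ⟨l, hw, hl⟩ := exists_isWalk_subset_iff.2
    ((hmono _ _ (hus.trans (strongOn_iff.1 hstr s hs t ht))).trans htv)
  obtain ⟨l', hp, hsub⟩ := hw.exists_isPath_subset
  refine ⟨l', hp, c, fun x hx => hΓ x ?_⟩
  exact (hl x (hsub (List.mem_of_mem_dropLast hx))).resolve_left (hp.ne_of_mem_dropLast hx)

lemma exists_colorCount_eq [Fintype V] (hS : S.Nonempty) :
    ∃ Γ : V → ℕ, (∀ x ∈ S, Γ x = 0) ∧ colorCount Γ = Fintype.card V - S.ncard + 1 := by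
  classical
  let e := Fintype.equivFin V
  refine ⟨fun x => if x ∈ S then 0 else e x + 1, fun x hx => if_pos hx, ?_⟩
  have hrange : Set.range (fun x => if x ∈ S then 0 else (e x : ℕ) + 1) =
      insert 0 ((fun x => (e x : ℕ) + 1) '' Sᶜ) := by
    ext n
    constructor
    · rintro ⟨x, rfl⟩
      by_cases hx : x ∈ S
      · simp [hx]
      · exact Or.inr ⟨x, hx, (if_neg hx).symm⟩
    · rintro (rfl | ⟨x, hx, rfl⟩)
      · obtain ⟨s, hs⟩ := hS
        exact ⟨s, if_pos hs⟩
      · exact ⟨x, if_neg hx⟩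
  have hinj : Function.Injective fun x => (e x : ℕ) + 1 := fun a b h => e.injective (Fin.ext (by simpa using h))
  rw [colorCount, hrange, Set.ncard_insert_of_notMem (by simp),
    Set.ncard_image_of_injective _ hinj, Set.ncard_compl, Nat.card_eq_fintype_card]

lemma colorCount_le [Fintype V] (Γ : V → ℕ) (c : ℕ) :
    colorCount Γ ≤ Fintype.card V - {x | Γ x = c}.ncard + 1 := by
  have hsub : Set.range Γ ⊆ insert c (Γ '' {x | Γ x = c}ᶜ) := by
    rintro _ ⟨x, rfl⟩
    by_cases hx : Γ x = c
    · exact Or.inl hx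
    · exact Or.inr ⟨x, hx, rfl⟩
  calc colorCount Γ ≤ (insert c (Γ '' {x | Γ x = c}ᶜ)).ncard := Set.ncard_le_ncard hsub
    _ ≤ (Γ '' {x | Γ x = c}ᶜ).ncard + 1 := Set.ncard_insert_le _ _
    _ ≤ {x | Γ x = c}ᶜ.ncard + 1 := by gcongr; exact Set.ncard_image_le
    _ = Fintype.card V - {x | Γ x = c}.ncard + 1 := by
      rw [Set.ncard_compl, Nat.card_eq_fintype_card]

lemma smcv_eq_of_forall_le {k : ℕ} (hk : ∃ Γ, IsSVMC A Γ ∧ colorCount Γ = k)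
    (hle : ∀ Γ, IsSVMC A Γ → colorCount Γ ≤ k) : smcv A = k :=
  IsGreatest.csSup_eq ⟨hk, by rintro _ ⟨Γ, hΓ, rfl⟩; exact hle Γ hΓ⟩

end SVMC

open SVMC

/-- a strong tournament `T` of order `n` with diameter `d ≥ 6`
and `Ω(T) ≤ 2d - 6` satisfies `smc_v(T) = n - Ω_v(T) + 1`. -/
theorem smcv_tournament {V : Type*} [Fintype V] (A : V → V → Prop) (d : ℕ)
    (htour : SVMC.IsTournament A) (hstrong : SVMC.Strong A)
    (hd : SVMC.diam A = d) (hd6 : 6 ≤ d) (hΩ : SVMC.Omega A ≤ 2 * d - 6) :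
    SVMC.smcv A = Fintype.card V - SVMC.Omegav A + 1 := by
  obtain ⟨x₀, x₁, hx⟩ := exists_dist_eq_diam (A := A) (by omega)
  rw [hd] at hx
  have : Nontrivial V := ⟨x₀, x₁, by rintro rfl; rw [dist_self] at hx; omega⟩
  have hn : Fintype.card V + 6 ≤ 2 * d := by have := card_le_omega hstrong; omega
  obtain ⟨S, hS, hScard⟩ := exists_strongAbsDom_ncard_eq_omegav hstrong
  refine smcv_eq_of_forall_le ?_ fun Γ hΓ => ?_
  · obtain ⟨Γ, hΓS, hcount⟩ := exists_colorCount_eq (V := V) hS.1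
    exact ⟨Γ, isSVMC_of_forall_mem_eq hS.2.1 hS.2.2.1 hS.2.2.2 hΓS, hScard ▸ hcount⟩
  · obtain ⟨c, hc⟩ := exists_color_reachesThrough hΓ hx (by omega) (by omega)
    have := omegav_le_ncard (strongAbsDom_of_reachesThrough htour hstrong hx (by omega) hc)
    have := colorCount_le Γ c
    omega
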